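/- Replacing every string x in an instance of String 3-Groups by x concatenated with its reverse yields an equivalent instance in which all strings are palindromes: the original instance has a valid grouping if and only if the modified instance does. -/
import Mathlib


/-- A triple of binary strings is valid if in every coordinate at most one of them has a `1`. -/
def ValidTriple {L : ℕ} (g : (Fin L → Bool) × (Fin L → Bool) × (Fin L → Bool)) : Prop :=
  ∀ i, ((if g.1 i then 1 else 0) + (if g.2.1 i then 1 else 0) +
    (if g.2.2 i then 1 else 0) : ℕ) ≤ 1

/-- The String 3-Groups condition: the three families can be partitioned into valid triples,
each string used exactly once (with multiplicity). -/
def HasGrouping {L : ℕ} (A B C : Multiset (Fin L → Bool)) : Prop :=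
  ∃ M : Multiset ((Fin L → Bool) × (Fin L → Bool) × (Fin L → Bool)),
    M.map Prod.fst = A ∧ M.map (fun g => g.2.1) = B ∧ M.map (fun g => g.2.2) = C ∧
    ∀ g ∈ M, ValidTriple g

/-- Replace a string `x` by `x` concatenated with its reverse. -/
def extendPal {L : ℕ} (x : Fin L → Bool) : Fin (L + L) → Bool :=
  Fin.append x (fun i => x i.rev)

lemma rev_natAdd' {L : ℕ} (j : Fin L) : (Fin.natAdd L j).rev = Fin.castAdd L j.rev := by
  ext
  simp only [Fin.val_rev, Fin.coe_castAdd, Fin.coe_natAdd]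
  omega

lemma rev_castAdd' {L : ℕ} (j : Fin L) : (Fin.castAdd L j).rev = Fin.natAdd L j.rev := by
  ext
  simp only [Fin.val_rev, Fin.coe_castAdd, Fin.coe_natAdd]
  omega

lemma extendPal_castAdd {L : ℕ} (x : Fin L → Bool) (j : Fin L) :
    extendPal x (Fin.castAdd L j) = x j := Fin.append_left _ _ _

lemma extendPal_natAdd {L : ℕ} (x : Fin L → Bool) (j : Fin L) :
    extendPal x (Fin.natAdd L j) = x j.rev := Fin.append_right _ _ _

lemma extendPal_pal {L : ℕ} (x : Fin L → Bool) (i : Fin (L + L)) :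
    extendPal x i = extendPal x i.rev := by
  refine Fin.addCases (fun j => ?_) (fun j => ?_) i
  · rw [rev_castAdd', extendPal_castAdd, extendPal_natAdd, Fin.rev_rev]
  · rw [rev_natAdd', extendPal_castAdd, extendPal_natAdd]

/-- shrink: restrict to the first half. -/
def shrink {L : ℕ} (y : Fin (L + L) → Bool) : Fin L → Bool :=
  fun j => y (Fin.castAdd L j)

lemma shrink_extendPal {L : ℕ} : ∀ x : Fin L → Bool, shrink (extendPal x) = x := by
  intro x; funext j; exact extendPal_castAdd x j

/-- Replacing every string by its concatenation with its own reverse yields an equivalent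
instance of String 3-Groups in which all strings are palindromes. -/
theorem string3Groups_palindromize {L : ℕ} (A B C : Multiset (Fin L → Bool))
    (hAB : Multiset.card A = Multiset.card B) (hBC : Multiset.card B = Multiset.card C) :
    (∀ x ∈ A.map extendPal + B.map extendPal + C.map extendPal,
      ∀ i : Fin (L + L), x i = x i.rev) ∧
    (HasGrouping A B C ↔
      HasGrouping (A.map extendPal) (B.map extendPal) (C.map extendPal)) := by
  constructor
  · intro x hx i
    simp only [Multiset.mem_add, Multiset.mem_map] at hx
    rcases hx with (⟨a, _, rfl⟩ | ⟨a, _, rfl⟩) | ⟨a, _, rfl⟩ <;> exact extendPal_pal a i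
  · constructor
    · rintro ⟨M, hA, hB, hC, hV⟩
      refine ⟨M.map (fun g => (extendPal g.1, extendPal g.2.1, extendPal g.2.2)),
        ?_, ?_, ?_, ?_⟩
      · rw [Multiset.map_map, ← hA, Multiset.map_map]; rfl
      · rw [Multiset.map_map, ← hB, Multiset.map_map]; rfl
      · rw [Multiset.map_map, ← hC, Multiset.map_map]; rfl
      · intro g' hg'
        rw [Multiset.mem_map] at hg'
        obtain ⟨g, hg, rfl⟩ := hg'
        intro i
        refine Fin.addCases (fun j => ?_) (fun j => ?_) i <;>
          simp only [extendPal_castAdd, extendPal_natAdd]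
        · exact hV g hg j
        · exact hV g hg j.rev
    · rintro ⟨M, hA, hB, hC, hV⟩
      refine ⟨M.map (fun g => (shrink g.1, shrink g.2.1, shrink g.2.2)), ?_, ?_, ?_, ?_⟩
      · rw [Multiset.map_map]
        have : (A.map extendPal).map shrink = A := by
          rw [Multiset.map_map]
          simp [Function.comp, shrink_extendPal]
        rw [← this, ← hA, Multiset.map_map]; rfl
      · rw [Multiset.map_map]
        have : (B.map extendPal).map shrink = B := by
          rw [Multiset.map_map]
          simp [Function.comp, shrink_extendPal]
        rw [← this, ← hB, Multiset.map_map]; rfl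
      · rw [Multiset.map_map]
        have : (C.map extendPal).map shrink = C := by
          rw [Multiset.map_map]
          simp [Function.comp, shrink_extendPal]
        rw [← this, ← hC, Multiset.map_map]; rfl
      · intro g' hg'
        rw [Multiset.mem_map] at hg'
        obtain ⟨g, hg, rfl⟩ := hg'
        intro j
        exact hV g hg (Fin.castAdd L j)
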